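/- arXiv:2507.04971 — 2 statements merged into one kernel-verified Lean document; each statement's English description precedes it below -/
import Mathlib

section
/- Let A = (2-σ)I - M with M ≥ 0 entrywise, ‖M‖₁ = σ < 1, and let b ∈ ℝⁿ be nonnegative with ‖b‖₁ < (1-σ)². Define f(μ) = ‖(A - μI)⁻¹ b‖₁ on [0, 1-σ]. Then f is differentiable with f'(μ) = ‖(A - μI)⁻² b‖₁, and f'(μ) < 1 for all μ ∈ [0, 1-σ]. -/
open Matrix Set

/-- ℓ¹ norm of a vector in ℝⁿ. -/
noncomputable def l1 {n : ℕ} (x : Fin n → ℝ) : ℝ := ∑ i, |x i|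

/-- Induced operator 1-norm of a real matrix (maximum column sum). -/
noncomputable def op1 {n : ℕ} (A : Matrix (Fin n) (Fin n) ℝ) : ℝ := ⨆ j, ∑ i, |A i j|

/-!
Write `A - μ • 1 = c • 1 - M` with `c = 2 - σ - μ ≥ 1 > σ`. Since every column sum of `M` is
below `c`, a minimum principle shows that `0 ≤ z ᵥ* (c • 1 - M)` forces `0 ≤ z`; hence `c • 1 - M`
is invertible with an entrywise nonnegative inverse. Multiplying `(c - σ) • 1 ≤ 1 ᵥ* (c • 1 - M)`
on the right by that inverse gives `op1 (c • 1 - M)⁻¹ ≤ 1 / (c - σ) ≤ 1 / (1 - σ)`, so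
`l1 ((A - μ • 1)⁻² *ᵥ b) ≤ l1 b / (1 - σ) ^ 2 < 1`. For the derivative, nonnegativity makes
`l1 ((A - t • 1)⁻¹ *ᵥ b)` the sum of the entries, a linear function of the resolvent, whose
derivative in `t` is `(A - t • 1)⁻²`.
-/

section OneNorm

variable {n : ℕ}

theorem l1_eq_sum_of_nonneg {x : Fin n → ℝ} (hx : ∀ i, 0 ≤ x i) : l1 x = ∑ i, x i :=
  Finset.sum_congr rfl fun i _ => abs_of_nonneg (hx i)

theorem l1_nonneg (x : Fin n → ℝ) : 0 ≤ l1 x :=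
  Finset.sum_nonneg fun _ _ => abs_nonneg _

theorem sum_abs_le_op1 (P : Matrix (Fin n) (Fin n) ℝ) (j : Fin n) : ∑ i, |P i j| ≤ op1 P :=
  le_ciSup (Finite.bddAbove_range fun j => ∑ i, |P i j|) j

theorem op1_nonneg (P : Matrix (Fin n) (Fin n) ℝ) : 0 ≤ op1 P :=
  Real.iSup_nonneg fun _ => Finset.sum_nonneg fun _ _ => abs_nonneg _

theorem op1_le {P : Matrix (Fin n) (Fin n) ℝ} {r : ℝ} (hr : 0 ≤ r) (h : ∀ j, ∑ i, |P i j| ≤ r) :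
    op1 P ≤ r :=
  Real.iSup_le h hr

theorem l1_mulVec_le (P : Matrix (Fin n) (Fin n) ℝ) (x : Fin n → ℝ) :
    l1 (P *ᵥ x) ≤ op1 P * l1 x :=
  calc l1 (P *ᵥ x) ≤ ∑ i, ∑ j, |P i j| * |x j| := by
        refine Finset.sum_le_sum fun i _ => ?_
        simp only [mulVec, dotProduct, ← abs_mul]
        exact Finset.abs_sum_le_sum_abs _ _
    _ = ∑ j, (∑ i, |P i j|) * |x j| := by simp only [Finset.sum_mul]; exact Finset.sum_comm
    _ ≤ ∑ j, op1 P * |x j| := by gcongr with j; exact sum_abs_le_op1 P j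
    _ = op1 P * l1 x := (Finset.mul_sum _ _ _).symm

theorem op1_mul_le (P Q : Matrix (Fin n) (Fin n) ℝ) : op1 (P * Q) ≤ op1 P * op1 Q :=
  op1_le (mul_nonneg (op1_nonneg P) (op1_nonneg Q)) fun j =>
    calc ∑ i, |(P * Q) i j| = l1 (P *ᵥ Q.col j) := rfl
      _ ≤ op1 P * l1 (Q.col j) := l1_mulVec_le P _
      _ ≤ op1 P * op1 Q := by gcongr; exacts [op1_nonneg P, sum_abs_le_op1 Q j]

end OneNorm

theorem mulVec_apply_nonneg {ι : Type*} [Fintype ι] {P : Matrix ι ι ℝ} {x : ι → ℝ}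
    (hP : ∀ i j, 0 ≤ P i j) (hx : ∀ i, 0 ≤ x i) (i : ι) : 0 ≤ (P *ᵥ x) i := by
  rw [mulVec, dotProduct]
  exact Finset.sum_nonneg fun j _ => mul_nonneg (hP i j) (hx j)

section ZMatrix

variable {ι : Type*} [Fintype ι] [DecidableEq ι] {M : Matrix ι ι ℝ} {c : ℝ}

theorem nonneg_of_nonneg_vecMul_smul_one_sub (hM : ∀ i j, 0 ≤ M i j) (hc : ∀ j, ∑ i, M i j < c)
    {z : ι → ℝ} (hz : 0 ≤ z ᵥ* (c • 1 - M)) : 0 ≤ z := by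
  intro k
  by_contra! hk
  have : Nonempty ι := ⟨k⟩
  obtain ⟨j, hj⟩ := Finite.exists_min z
  have hzj : z j < 0 := (hj k).trans_lt hk
  have hzB : (z ᵥ* (c • 1 - M)) j = z j * c - ∑ i, z i * M i j := by
    simp [vecMul, dotProduct, mul_sub, Finset.sum_sub_distrib, one_apply]
  have hmin : z j * ∑ i, M i j ≤ ∑ i, z i * M i j := by
    rw [Finset.mul_sum]
    exact Finset.sum_le_sum fun i _ => mul_le_mul_of_nonneg_right (hj i) (hM i j)
  have : 0 ≤ (z ᵥ* (c • 1 - M)) j := hz j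
  nlinarith [mul_neg_of_neg_of_pos hzj (sub_pos.2 (hc j))]

theorem isUnit_smul_one_sub (hM : ∀ i j, 0 ≤ M i j) (hc : ∀ j, ∑ i, M i j < c) :
    IsUnit (c • 1 - M) := by
  refine vecMul_injective_iff_isUnit.1 fun z w hzw => ?_
  have hzero : (z - w) ᵥ* (c • 1 - M) = 0 := by
    rw [sub_vecMul]
    exact sub_eq_zero.2 hzw
  refine le_antisymm ?_ ?_ <;> rw [← sub_nonneg]
  · refine nonneg_of_nonneg_vecMul_smul_one_sub hM hc ?_
    rw [← neg_sub, neg_vecMul, hzero, neg_zero]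
  · exact nonneg_of_nonneg_vecMul_smul_one_sub hM hc hzero.ge

theorem inv_smul_one_sub_apply_nonneg (hM : ∀ i j, 0 ≤ M i j) (hc : ∀ j, ∑ i, M i j < c)
    (i j : ι) : 0 ≤ (c • 1 - M)⁻¹ i j := by
  have hrow : (c • 1 - M)⁻¹.row i ᵥ* (c • 1 - M) = Pi.single i 1 := by
    rw [← single_one_vecMul, vecMul_vecMul,
      nonsing_inv_mul _ ((isUnit_iff_isUnit_det _).1 (isUnit_smul_one_sub hM hc)), vecMul_one]
  exact nonneg_of_nonneg_vecMul_smul_one_sub hM hc (hrow ▸ Pi.single_nonneg.2 zero_le_one) j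

theorem mul_sum_inv_apply_le_one {B : Matrix ι ι ℝ} (hB : IsUnit B) (hinv : ∀ i j, 0 ≤ B⁻¹ i j)
    {d : ℝ} (hd : ∀ k, d ≤ ∑ i, B i k) (j : ι) : d * ∑ i, B⁻¹ i j ≤ 1 :=
  calc d * ∑ i, B⁻¹ i j = ∑ k, d * B⁻¹ k j := Finset.mul_sum _ _ _
    _ ≤ ∑ k, (∑ i, B i k) * B⁻¹ k j := by gcongr with k; exacts [hinv k j, hd k]
    _ = ∑ i, (B * B⁻¹) i j := by simp only [mul_apply, Finset.sum_mul]; exact Finset.sum_comm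
    _ = 1 := by simp [mul_nonsing_inv _ ((isUnit_iff_isUnit_det _).1 hB), one_apply]

end ZMatrix

theorem op1_inv_smul_one_sub_le {n : ℕ} {M : Matrix (Fin n) (Fin n) ℝ} {c σ : ℝ}
    (hM : ∀ i j, 0 ≤ M i j) (hσ : ∀ j, ∑ i, M i j ≤ σ) (hσc : σ < c) :
    op1 (c • 1 - M)⁻¹ ≤ 1 / (c - σ) := by
  have hc : ∀ j, ∑ i, M i j < c := fun j => (hσ j).trans_lt hσc
  have hinv := inv_smul_one_sub_apply_nonneg hM hc
  have hcol : ∀ k, c - σ ≤ ∑ i, (c • 1 - M) i k := fun k => by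
    have : ∑ i, (c • 1 - M) i k = c - ∑ i, M i k := by simp [Finset.sum_sub_distrib, one_apply]
    linarith [hσ k]
  refine op1_le (one_div_nonneg.2 (sub_pos.2 hσc).le) fun j => ?_
  rw [le_div_iff₀' (sub_pos.2 hσc)]
  simpa only [abs_of_nonneg (hinv _ j)] using
    mul_sum_inv_apply_le_one (isUnit_smul_one_sub hM hc) hinv hcol j

section Resolvent

variable {ι : Type*} [Fintype ι] [DecidableEq ι]

-- The choice of norm is immaterial: it only provides the complete normed algebra structure
-- that `hasFDerivAt_ringInverse` needs.
attribute [local instance] Matrix.linftyOpNormedAddCommGroup Matrix.linftyOpNormedRing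
  Matrix.linftyOpNormedAlgebra

theorem hasDerivAt_inv_sub_smul_one_apply {A : Matrix ι ι ℝ} {μ : ℝ} (hμ : IsUnit (A - μ • 1))
    (i j : ι) :
    HasDerivAt (fun t => (A - t • 1)⁻¹ i j) (((A - μ • 1)⁻¹ * (A - μ • 1)⁻¹) i j) μ := by
  have hsub : HasDerivAt (fun t : ℝ => A - t • (1 : Matrix ι ι ℝ)) (-1) μ := by
    have h := ((hasDerivAt_id μ).smul_const (1 : Matrix ι ι ℝ)).const_sub A
    simp only [id, one_smul] at h
    exact h
  have hres : HasDerivAt (fun t => Ring.inverse (A - t • 1))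
      (Ring.inverse (A - μ • 1) * Ring.inverse (A - μ • 1)) μ := by
    have h := (hasFDerivAt_ringInverse (𝕜 := ℝ) hμ.unit).comp_hasDerivAt μ hsub
    simp only [coe_units_inv, IsUnit.unit_spec, nonsing_inv_eq_ringInverse,
      _root_.neg_apply, ContinuousLinearMap.mulLeftRight_apply, mul_neg, mul_one, neg_mul,
      neg_neg] at h
    exact h
  simp only [nonsing_inv_eq_ringInverse]
  exact (LinearMap.toContinuousLinearMap (entryLinearMap ℝ ℝ i j)).hasFDerivAt.comp_hasDerivAt μ hres

end Resolvent

theorem hasDerivWithinAt_l1_inv_sub_smul_one_mulVec {n : ℕ} {A : Matrix (Fin n) (Fin n) ℝ}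
    {b : Fin n → ℝ} {s : Set ℝ} {μ : ℝ} (hb : ∀ i, 0 ≤ b i)
    (hinv : ∀ t ∈ s, ∀ i j, 0 ≤ (A - t • 1)⁻¹ i j) (hμs : μ ∈ s) (hμ : IsUnit (A - μ • 1)) :
    HasDerivWithinAt (fun t => l1 ((A - t • 1)⁻¹ *ᵥ b))
      (l1 (((A - μ • 1)⁻¹ * (A - μ • 1)⁻¹) *ᵥ b)) s μ := by
  have hsq : ∀ i j, 0 ≤ ((A - μ • 1)⁻¹ * (A - μ • 1)⁻¹) i j := fun i j => by
    rw [mul_apply]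
    exact Finset.sum_nonneg fun k _ => mul_nonneg (hinv μ hμs i k) (hinv μ hμs k j)
  have hentry : ∀ i, HasDerivAt (fun t => ((A - t • 1)⁻¹ *ᵥ b) i)
      ((((A - μ • 1)⁻¹ * (A - μ • 1)⁻¹) *ᵥ b) i) μ := fun i => by
    simp only [mulVec, dotProduct]
    exact HasDerivAt.fun_sum fun j _ => (hasDerivAt_inv_sub_smul_one_apply hμ i j).mul_const (b j)
  have hsum : HasDerivAt (fun t => ∑ i, ((A - t • 1)⁻¹ *ᵥ b) i)
      (∑ i, (((A - μ • 1)⁻¹ * (A - μ • 1)⁻¹) *ᵥ b) i) μ :=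
    HasDerivAt.fun_sum fun i _ => hentry i
  rw [l1_eq_sum_of_nonneg (mulVec_apply_nonneg hsq hb)]
  exact hsum.hasDerivWithinAt.congr_of_mem
    (fun t ht => l1_eq_sum_of_nonneg (mulVec_apply_nonneg (hinv t ht) hb)) hμs

/-- With `A = (2-σ)I - M`, `M ≥ 0`, `σ = ‖M‖₁ < 1`, `b ≥ 0`, `‖b‖₁ < (1-σ)²`,
the function `f(μ) = ‖(A-μI)⁻¹b‖₁` is differentiable on `[0, 1-σ]` with
derivative `f'(μ) = ‖(A-μI)⁻²b‖₁`, and `f'(μ) < 1` there. -/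
theorem stmt_4 {n : ℕ} (M : Matrix (Fin n) (Fin n) ℝ) (hM : ∀ i j, 0 ≤ M i j)
    (σ : ℝ) (hσ : σ = op1 M) (hσ1 : σ < 1)
    (A : Matrix (Fin n) (Fin n) ℝ) (hA : A = (2 - σ) • (1 : Matrix (Fin n) (Fin n) ℝ) - M)
    (b : Fin n → ℝ) (hb : ∀ i, 0 ≤ b i) (hb1 : l1 b < (1 - σ) ^ 2) :
    ∀ μ ∈ Icc (0 : ℝ) (1 - σ),
      HasDerivWithinAt (fun t => l1 ((A - t • 1)⁻¹.mulVec b))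
        (l1 (((A - μ • 1)⁻¹ * (A - μ • 1)⁻¹).mulVec b)) (Icc (0 : ℝ) (1 - σ)) μ ∧
      l1 (((A - μ • 1)⁻¹ * (A - μ • 1)⁻¹).mulVec b) < 1 := by
  have hcol : ∀ j, ∑ i, M i j ≤ σ := fun j =>
    (Finset.sum_le_sum fun i _ => le_abs_self (M i j)).trans (hσ ▸ sum_abs_le_op1 M j)
  have hshift : ∀ t, A - t • 1 = (2 - σ - t) • 1 - M := fun t => by rw [hA, sub_smul]; module
  have hlt : ∀ t ∈ Icc (0 : ℝ) (1 - σ), ∀ j, ∑ i, M i j < 2 - σ - t := fun t ht j => by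
    linarith [hcol j, ht.2]
  intro μ hμ
  refine ⟨hasDerivWithinAt_l1_inv_sub_smul_one_mulVec hb
    (fun t ht => hshift t ▸ inv_smul_one_sub_apply_nonneg hM (hlt t ht)) hμ
    (hshift μ ▸ isUnit_smul_one_sub hM (hlt μ hμ)), ?_⟩
  have hP : op1 (A - μ • 1)⁻¹ ≤ 1 / (1 - σ) := by
    rw [hshift]
    refine (op1_inv_smul_one_sub_le hM hcol (by linarith [hμ.2])).trans ?_
    exact one_div_le_one_div_of_le (by linarith) (by linarith [hμ.2])
  calc l1 (((A - μ • 1)⁻¹ * (A - μ • 1)⁻¹) *ᵥ b)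
      ≤ op1 (A - μ • 1)⁻¹ * op1 (A - μ • 1)⁻¹ * l1 b :=
        (l1_mulVec_le _ b).trans (by gcongr; exacts [l1_nonneg b, op1_mul_le _ _])
    _ ≤ 1 / (1 - σ) * (1 / (1 - σ)) * l1 b := by gcongr; exacts [l1_nonneg b, op1_nonneg _]
    _ = l1 b / (1 - σ) ^ 2 := by rw [div_mul_div_comm, one_mul, ← sq, one_div_mul_eq_div]
    _ < 1 := (div_lt_one (pow_pos (sub_pos.2 hσ1) 2)).2 hb1
end

section
/- Under the recursions of the doubling algorithm with initial values c₀ = 1ᵀA⁻¹b, u₀ = A⁻¹b, v₀ = A⁻ᵀ1, F₀ = A⁻¹, the quantities α_k = ‖u_kv_kᵀ‖₁ and β_k = ‖c_kF_k‖₁ satisfy α_k < (2^k/(2^k+1))² and β_k < 1/(2^k+1)² for all k ≥ 0. In particular, inductively: if α_k < (2^k/(2^k+1))² and β_k < 1/(2^k+1)², then α_k(1+β_k/(1-α_k))² ≤ (2^{k+1}/(2^{k+1}+1))² and (β_k/(1-α_k))² < 1/(2^{k+1}+1)². -/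
/-!
With `t = 2^k`, the bound `α_k < (t/(t+1))²` gives `1 - α_k > (2t+1)/(t+1)²`, so together with
`β_k < 1/(t+1)²` the ratio `q = β_k/(1-α_k)` is below `1/(2t+1)`. Hence `q² < 1/(2t+1)²`, and
`(1 + q)² < ((2t+2)/(2t+1))²` turns `(t/(t+1))²` into `(2t/(2t+1))²`: both bounds pass from `t` to `2t`.
-/

lemma div_one_sub_lt_one_div {a b t : ℝ} (ht : 0 ≤ t) (ha : a < (t / (t + 1)) ^ 2)
    (hb : b < 1 / (t + 1) ^ 2) : 0 < 1 - a ∧ b / (1 - a) < 1 / (2 * t + 1) := by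
  have hpos : 0 < (t + 1) ^ 2 := by positivity
  have hgap : (2 * t + 1) / (t + 1) ^ 2 < 1 - a := by
    rw [div_pow] at ha
    have : 1 - t ^ 2 / (t + 1) ^ 2 = (2 * t + 1) / (t + 1) ^ 2 := by field_simp; ring
    linarith
  have hsub : 0 < 1 - a := lt_trans (by positivity) hgap
  refine ⟨hsub, (div_lt_div_iff₀ hsub (by positivity)).2 ?_⟩
  calc b * (2 * t + 1) < 1 / (t + 1) ^ 2 * (2 * t + 1) := by gcongr
    _ = (2 * t + 1) / (t + 1) ^ 2 := by ring
    _ < 1 * (1 - a) := by rwa [one_mul]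

lemma doubling_bounds_step {a b t : ℝ} (ht : 0 < t) (hb0 : 0 ≤ b)
    (ha : a < (t / (t + 1)) ^ 2) (hb : b < 1 / (t + 1) ^ 2) :
    a * (1 + b / (1 - a)) ^ 2 < (2 * t / (2 * t + 1)) ^ 2 ∧
      (b / (1 - a)) ^ 2 < 1 / (2 * t + 1) ^ 2 := by
  obtain ⟨hsub, hq⟩ := div_one_sub_lt_one_div ht.le ha hb
  have hq0 : 0 ≤ b / (1 - a) := div_nonneg hb0 hsub.le
  constructor
  · calc a * (1 + b / (1 - a)) ^ 2 < (t / (t + 1)) ^ 2 * (1 + b / (1 - a)) ^ 2 := by gcongr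
      _ < (t / (t + 1)) ^ 2 * (1 + 1 / (2 * t + 1)) ^ 2 := by gcongr
      _ = (2 * t / (2 * t + 1)) ^ 2 := by field_simp; ring
  · calc (b / (1 - a)) ^ 2 < (1 / (2 * t + 1)) ^ 2 := by gcongr
      _ = 1 / (2 * t + 1) ^ 2 := by rw [one_div_pow]

theorem stmt_16_general (α β : ℕ → ℝ) (hβ0 : ∀ k, 0 ≤ β k)
    (ha : α 0 < 1 / 4) (hb : β 0 < 1 / 4)
    (hrecβ : ∀ k, β (k + 1) ≤ (β k / (1 - α k)) ^ 2)
    (hrecα : ∀ k, α (k + 1) ≤ α k * (1 + β k / (1 - α k)) ^ 2) :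
    ∀ k, α k < ((2 : ℝ) ^ k / (2 ^ k + 1)) ^ 2 ∧ β k < 1 / ((2 : ℝ) ^ k + 1) ^ 2 := by
  intro k
  induction k with
  | zero => norm_num [ha, hb]
  | succ k ih =>
    obtain ⟨hα, hβ⟩ := doubling_bounds_step (by positivity) (hβ0 k) ih.1 ih.2
    rw [pow_succ' (2 : ℝ) k]
    exact ⟨(hrecα k).trans_lt hα, (hrecβ k).trans_lt hβ⟩

/-- Lemma 19 (abstract form): if `α₀ < 1/4`, `β₀ < 1/4`, and the sequences satisfy
`β_{k+1} ≤ (β_k/(1-α_k))²` and `α_{k+1} ≤ α_k(1+β_k/(1-α_k))²`, then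
`α_k < (2^k/(2^k+1))²` and `β_k < 1/(2^k+1)²` for all `k`. -/
theorem stmt_16 (α β : ℕ → ℝ) (hα0 : ∀ k, 0 ≤ α k) (hβ0 : ∀ k, 0 ≤ β k)
    (ha : α 0 < 1 / 4) (hb : β 0 < 1 / 4)
    (hrecβ : ∀ k, β (k + 1) ≤ (β k / (1 - α k)) ^ 2)
    (hrecα : ∀ k, α (k + 1) ≤ α k * (1 + β k / (1 - α k)) ^ 2) :
    ∀ k, α k < ((2 : ℝ) ^ k / (2 ^ k + 1)) ^ 2 ∧ β k < 1 / ((2 : ℝ) ^ k + 1) ^ 2 :=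
  stmt_16_general α β hβ0 ha hb hrecβ hrecα
end
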